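/- For every integer k ≥ 2 and every nonzero real number x, x^k · r_k(2 - 1/x) = p_k(x), where r_k and p_k are evaluated at real arguments. -/

import Mathlib

/-!
Put `y = 2 - 1/x`, so that `x * y = 2 * x - 1`. Then `x ^ k * r_k(y)` and `p_k(x)` obey the same
recursion `f (k + 1) = (2x - 1) f k - x ^ (k + 1)` with `f 0 = 1`: on the left because
`r_(k+1) = X * r_k - 1`, on the right because `-p_k` is the generating polynomial
`∑ P(k,i) X^(k-i)` of row `k`, and the rule `P(k+1,i+1) = 2 P(k,i+1) - P(k,i)` turns into
`row (k+1) = (2X - 1) row k + X^(k+1)`.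
-/

/-- The recursive triangle `P` from the paper: `P 0 0 = -1`, `P 0 (j+1) = 0`,
`P (i+1) 0 = -1`, and `P i j = 2 * P (i-1) j - P (i-1) (j-1)` for `i, j ≥ 1`. -/
def P : ℕ → ℕ → ℤ
  | 0, 0 => -1
  | 0, _ + 1 => 0
  | _ + 1, 0 => -1
  | i + 1, j + 1 => 2 * P i (j + 1) - P i j

open Polynomial Finset

lemma P_zero_right (i : ℕ) : P i 0 = -1 := by
  cases i <;> rfl

lemma P_eq_zero_of_lt {i j : ℕ} (h : i < j) : P i j = 0 := by
  induction i generalizing j with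
  | zero => cases j with
    | zero => omega
    | succ j => rfl
  | succ i ih => cases j with
    | zero => omega
    | succ j => rw [P, ih (by omega), ih (by omega)]; rfl

lemma sum_antidiagonal_eq_add_sum_Icc {M : Type*} [AddCommMonoid M] (f : ℕ → ℕ → M)
    (n : ℕ) :
    ∑ ij ∈ antidiagonal n, f ij.1 ij.2 = f 0 n + ∑ i ∈ Icc 1 n, f i (n - i) := by
  rw [Nat.sum_antidiagonal_eq_sum_range_succ, Nat.range_succ_eq_Icc_zero,
    Icc_eq_cons_Ioc n.zero_le, sum_cons, ← Icc_add_one_left_eq_Ioc, zero_add, Nat.sub_zero]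

noncomputable def rPoly (k : ℕ) : ℤ[X] := X ^ k - ∑ i ∈ Icc 1 k, X ^ (k - i)

noncomputable def pPoly (k : ℕ) : ℤ[X] := X ^ k - ∑ i ∈ Icc 1 k, C (P k i) * X ^ (k - i)

/-- Row `k` of the triangle, `P k i` being the coefficient of `X ^ (k - i)`; summing over the
antidiagonal avoids truncated subtraction. -/
noncomputable def rowPoly (k : ℕ) : ℤ[X] := ∑ ij ∈ antidiagonal k, C (P k ij.1) * X ^ ij.2

lemma rPoly_succ (k : ℕ) : rPoly (k + 1) = X * rPoly k - 1 := by
  have hr (n : ℕ) : rPoly n = 2 * X ^ n - ∑ ij ∈ antidiagonal n, (X : ℤ[X]) ^ ij.2 := by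
    rw [rPoly, sum_antidiagonal_eq_add_sum_Icc (fun _ e ↦ (X : ℤ[X]) ^ e)]
    ring
  rw [hr, hr, Nat.sum_antidiagonal_succ', mul_sub, mul_sum]
  simp only [pow_zero, pow_succ']
  ring

lemma pPoly_eq_neg_rowPoly (k : ℕ) : pPoly k = -rowPoly k := by
  rw [pPoly, rowPoly, sum_antidiagonal_eq_add_sum_Icc (fun i e ↦ C (P k i) * X ^ e), P_zero_right]
  simp only [map_neg, map_one]
  ring

/-- Peel the antidiagonal of `k + 1` from either end; the last term vanishes as
`P k (k + 1) = 0`. -/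
lemma sum_antidiagonal_C_P_succ_mul_X_pow (k : ℕ) :
    ∑ ij ∈ antidiagonal k, C (P k (ij.1 + 1)) * (X : ℤ[X]) ^ ij.2 =
      X * rowPoly k + X ^ (k + 1) := by
  let f : ℕ × ℕ → ℤ[X] := fun ij ↦ C (P k ij.1) * X ^ ij.2
  have h := (Nat.sum_antidiagonal_succ (n := k) (f := f)).symm.trans
    (Nat.sum_antidiagonal_succ' (f := f))
  simp only [f, P_zero_right, P_eq_zero_of_lt k.lt_succ_self, map_neg, map_one, map_zero,
    zero_mul, zero_add] at h
  have hX : ∑ ij ∈ antidiagonal k, X * (C (P k ij.1) * X ^ ij.2) =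
      ∑ ij ∈ antidiagonal k, C (P k ij.1) * (X : ℤ[X]) ^ (ij.2 + 1) :=
    sum_congr rfl fun _ _ ↦ by ring
  rw [rowPoly, mul_sum, hX]
  linear_combination h

lemma rowPoly_succ (k : ℕ) : rowPoly (k + 1) = (2 * X - 1) * rowPoly k + X ^ (k + 1) := by
  have hrow : rowPoly (k + 1) =
      -X ^ (k + 1) + ∑ ij ∈ antidiagonal k, C (P (k + 1) (ij.1 + 1)) * X ^ ij.2 := by
    rw [rowPoly, Nat.sum_antidiagonal_succ, P_zero_right, map_neg, map_one, neg_one_mul]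
  have hsplit : ∑ ij ∈ antidiagonal k, C (P (k + 1) (ij.1 + 1)) * X ^ ij.2 =
      2 * ∑ ij ∈ antidiagonal k, C (P k (ij.1 + 1)) * X ^ ij.2 - rowPoly k := by
    rw [rowPoly, mul_sum, ← sum_sub_distrib]
    refine sum_congr rfl fun _ _ ↦ ?_
    simp only [P, map_sub, map_mul, map_ofNat]
    ring
  rw [hrow, hsplit, sum_antidiagonal_C_P_succ_mul_X_pow]
  ring

lemma pPoly_succ (k : ℕ) : pPoly (k + 1) = (2 * X - 1) * pPoly k - X ^ (k + 1) := by
  rw [pPoly_eq_neg_rowPoly, pPoly_eq_neg_rowPoly, rowPoly_succ]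
  ring

theorem pow_mul_aeval_rPoly_eq_aeval_pPoly {R : Type*} [CommRing R] {x y : R}
    (hxy : x * y = 2 * x - 1) (k : ℕ) : x ^ k * aeval y (rPoly k) = aeval x (pPoly k) := by
  induction k with
  | zero => simp [rPoly, pPoly]
  | succ k ih =>
    rw [rPoly_succ, pPoly_succ, map_sub, map_sub, map_mul, map_mul, ← ih]
    simp only [aeval_X, map_one, map_pow, map_sub, map_mul, map_ofNat]
    linear_combination x ^ k * aeval y (rPoly k) * hxy

open Polynomial in
theorem pow_mul_rk_eval_eq_pk_general (k : ℕ) (x : ℝ) (hx : x ≠ 0) :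
    x ^ k * aeval (2 - 1 / x) ((X : ℤ[X]) ^ k - ∑ i ∈ Finset.Icc 1 k, X ^ (k - i)) =
      aeval x ((X : ℤ[X]) ^ k - ∑ i ∈ Finset.Icc 1 k, C (P k i) * X ^ (k - i)) :=
  pow_mul_aeval_rPoly_eq_aeval_pPoly (by field_simp) k

open Polynomial in
/-- For `k ≥ 2` and any nonzero real `x`, `x^k * r_k(2 - 1/x) = p_k(x)`, where
`r_k(X) = X^k - ∑_{i=1}^k X^(k-i)` and `p_k(X) = X^k - ∑_{i=1}^k P k i * X^(k-i)`
are evaluated at real arguments. -/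
theorem pow_mul_rk_eval_eq_pk (k : ℕ) (hk : 2 ≤ k) (x : ℝ) (hx : x ≠ 0) :
    x ^ k * aeval (2 - 1 / x) ((X : ℤ[X]) ^ k - ∑ i ∈ Finset.Icc 1 k, X ^ (k - i)) =
      aeval x ((X : ℤ[X]) ^ k - ∑ i ∈ Finset.Icc 1 k, C (P k i) * X ^ (k - i)) :=
  pow_mul_rk_eval_eq_pk_general k x hx
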